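/- Let X = {a_1,…,a_ℓ} be a finite set of ℓ distinct points, N ≥ 1, c : X^N → ℝ a symmetric cost function, and λ* ∈ P(X). Then the symmetric multi-marginal optimal transport problem and its extremal reformulation have the same optimal value: min{ Σ_{x ∈ X^N} γ(x) c(x) : γ ∈ P_sym(X^N), M_1γ = λ* } = min{ Σ_{λ ∈ P_{1/N}(X)} c_λ α_λ : α ≥ 0, Σ_{λ ∈ P_{1/N}(X)} α_λ λ = λ* }, where the correspondence γ = Σ_λ α_λ γ_λ is a cost-preserving bijection between the two feasible sets. -/
import Mathlib


open Finset

noncomputable def symmetrize (N ℓ : ℕ) (γ : (Fin N → Fin ℓ) → ℝ) : (Fin N → Fin ℓ) → ℝ :=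
  fun x => (1 / (Nat.factorial N : ℝ)) * ∑ σ : Equiv.Perm (Fin N), γ (x ∘ σ)

def IsProbVec {α : Type*} [Fintype α] (p : α → ℝ) : Prop :=
  (∀ x, 0 ≤ p x) ∧ ∑ x, p x = 1

def IsSymmFun (N ℓ : ℕ) (γ : (Fin N → Fin ℓ) → ℝ) : Prop :=
  ∀ (σ : Equiv.Perm (Fin N)) (x : Fin N → Fin ℓ), γ (x ∘ σ) = γ x

def PSym (N ℓ : ℕ) : Set ((Fin N → Fin ℓ) → ℝ) :=
  {γ | IsProbVec γ ∧ IsSymmFun N ℓ γ}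

noncomputable def margOf (N ℓ : ℕ) (x : Fin N → Fin ℓ) : Fin ℓ → ℝ :=
  fun j => ((Finset.univ.filter fun k => x k = j).card : ℝ) / (N : ℝ)

noncomputable def QuantFinset (N ℓ : ℕ) : Finset (Fin ℓ → ℝ) :=
  Finset.image (margOf N ℓ) Finset.univ

noncomputable def gammaLam (N ℓ : ℕ) (lam : Fin ℓ → ℝ) : (Fin N → Fin ℓ) → ℝ :=
  if h : ∃ i : Fin N → Fin ℓ, margOf N ℓ i = lam then
    symmetrize N ℓ (fun x => if x = h.choose then 1 else 0)
  else 0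

noncomputable def marg1 (N ℓ : ℕ) [NeZero N] (γ : (Fin N → Fin ℓ) → ℝ) : Fin ℓ → ℝ :=
  fun j => ∑ x : Fin N → Fin ℓ, if x 0 = j then γ x else 0

noncomputable def marg2 (N ℓ : ℕ) [NeZero N] (γ : (Fin N → Fin ℓ) → ℝ) : Fin ℓ → Fin ℓ → ℝ :=
  fun j k => ∑ x : Fin N → Fin ℓ, if x 0 = j ∧ x 1 = k then γ x else 0

noncomputable def cCoef (N ℓ : ℕ) (c : (Fin N → Fin ℓ) → ℝ) (lam : Fin ℓ → ℝ) : ℝ :=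
  ∑ x : Fin N → Fin ℓ, gammaLam N ℓ lam x * c x

section helpers
variable {N ℓ : ℕ}

lemma comp_bij (σ : Equiv.Perm (Fin N)) :
    Function.Bijective (fun x : Fin N → Fin ℓ => x ∘ σ) := by
  constructor
  · intro a b hab
    funext k
    have := congrFun hab (σ.symm k)
    simpa using this
  · intro b
    exact ⟨b ∘ ⇑σ.symm, by funext k; simp⟩

lemma sum_comp_perm (γ : (Fin N → Fin ℓ) → ℝ) (σ : Equiv.Perm (Fin N)) :
    ∑ x : Fin N → Fin ℓ, γ (x ∘ σ) = ∑ x : Fin N → Fin ℓ, γ x :=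
  Fintype.sum_bijective _ (comp_bij σ) _ _ (fun _ => rfl)

lemma margOf_comp (x : Fin N → Fin ℓ) (σ : Equiv.Perm (Fin N)) :
    margOf N ℓ (x ∘ σ) = margOf N ℓ x := by
  funext j
  unfold margOf
  congr 2
  exact Finset.card_equiv σ (fun i => by simp)

lemma exists_perm_of_margOf_eq [NeZero N] {x y : Fin N → Fin ℓ}
    (h : margOf N ℓ x = margOf N ℓ y) : ∃ σ : Equiv.Perm (Fin N), y = x ∘ σ := by
  have hN : (N : ℝ) ≠ 0 := Nat.cast_ne_zero.2 (NeZero.ne N)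
  have hcard : ∀ j, (univ.filter fun k => x k = j).card = (univ.filter fun k => y k = j).card := by
    intro j
    have h1 := congrFun h j
    unfold margOf at h1
    field_simp at h1
    exact_mod_cast h1
  have e : ∀ j : Fin ℓ, {k // x k = j} ≃ {k // y k = j} := fun j =>
    Fintype.equivOfCardEq (by
      simp only [Fintype.card_subtype]
      exact hcard j)
  refine ⟨(Equiv.ofFiberEquiv e).symm, funext fun k => ?_⟩
  have h2 := Equiv.ofFiberEquiv_map e ((Equiv.ofFiberEquiv e).symm k)
  rw [Equiv.apply_symm_apply] at h2
  exact h2.symm ▸ rfl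

lemma symm_const [NeZero N] {γ : (Fin N → Fin ℓ) → ℝ} (hγ : IsSymmFun N ℓ γ)
    {x y : Fin N → Fin ℓ} (h : margOf N ℓ x = margOf N ℓ y) : γ x = γ y := by
  obtain ⟨σ, rfl⟩ := exists_perm_of_margOf_eq h
  exact (hγ σ x).symm

lemma symmetrize_symm (γ : (Fin N → Fin ℓ) → ℝ) : IsSymmFun N ℓ (symmetrize N ℓ γ) := by
  intro τ x
  unfold symmetrize
  congr 1
  exact Fintype.sum_equiv (Equiv.mulLeft τ) _ _ (fun σ => by
    simp [Function.comp_assoc, ← Equiv.Perm.coe_mul])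

lemma sum_symmetrize (γ : (Fin N → Fin ℓ) → ℝ) :
    ∑ x : Fin N → Fin ℓ, symmetrize N ℓ γ x
      = ∑ x : Fin N → Fin ℓ, γ x := by
  unfold symmetrize
  rw [← Finset.mul_sum, Finset.sum_comm]
  have : ∀ σ : Equiv.Perm (Fin N), ∑ x : Fin N → Fin ℓ, γ (x ∘ σ) = ∑ x : Fin N → Fin ℓ, γ x :=
    sum_comp_perm γ
  rw [Finset.sum_congr rfl (fun σ _ => this σ), Finset.sum_const, nsmul_eq_mul]
  have hN : ((Nat.factorial N : ℕ) : ℝ) ≠ 0 := Nat.cast_ne_zero.2 (Nat.factorial_ne_zero N)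
  rw [Finset.card_univ, Fintype.card_perm, Fintype.card_fin]
  field_simp

end helpers

section helpers2
variable {N ℓ : ℕ}

lemma quant_mem_iff (lam : Fin ℓ → ℝ) :
    lam ∈ QuantFinset N ℓ ↔ ∃ i : Fin N → Fin ℓ, margOf N ℓ i = lam := by
  simp [QuantFinset]

lemma gammaLam_nonneg (lam : Fin ℓ → ℝ) (x : Fin N → Fin ℓ) : 0 ≤ gammaLam N ℓ lam x := by
  unfold gammaLam
  split
  · unfold symmetrize
    apply mul_nonneg
    · positivity
    · apply Finset.sum_nonneg
      intro σ _
      simp only []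
      split <;> norm_num
  · simp

lemma gammaLam_symm (lam : Fin ℓ → ℝ) : IsSymmFun N ℓ (gammaLam N ℓ lam) := by
  intro σ x
  unfold gammaLam
  split
  · exact symmetrize_symm _ σ x
  · simp

lemma gammaLam_sum (lam : Fin ℓ → ℝ) (h : ∃ i : Fin N → Fin ℓ, margOf N ℓ i = lam) :
    ∑ x : Fin N → Fin ℓ, gammaLam N ℓ lam x = 1 := by
  unfold gammaLam
  rw [dif_pos h, sum_symmetrize]
  simp

lemma gammaLam_support [NeZero N] (lam : Fin ℓ → ℝ) {x : Fin N → Fin ℓ}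
    (hx : margOf N ℓ x ≠ lam) : gammaLam N ℓ lam x = 0 := by
  unfold gammaLam
  split
  case isTrue h =>
    unfold symmetrize
    rw [mul_eq_zero]
    right
    apply Finset.sum_eq_zero
    intro σ _
    simp only []
    rw [if_neg]
    intro hcomp
    apply hx
    rw [← margOf_comp x σ, hcomp, h.choose_spec]
  · simp

lemma sum_lam_eq_one [NeZero N] {lam : Fin ℓ → ℝ} (h : lam ∈ QuantFinset N ℓ) :
    ∑ j, lam j = 1 := by
  obtain ⟨x0, hx0⟩ := (quant_mem_iff lam).1 h
  subst hx0
  unfold margOf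
  rw [← Finset.sum_div]
  have : ∀ j : Fin ℓ, ((univ.filter fun k => x0 k = j).card : ℝ)
      = ∑ k : Fin N, if x0 k = j then (1:ℝ) else 0 := by
    intro j
    rw [Finset.card_filter]
    push_cast
    rfl
  rw [Finset.sum_congr rfl (fun j _ => this j), Finset.sum_comm]
  have : ∀ k : Fin N, ∑ j : Fin ℓ, (if x0 k = j then (1:ℝ) else 0) = 1 := by
    intro k
    rw [Finset.sum_ite_eq univ (x0 k) (fun _ => (1:ℝ))]
    simp
  rw [Finset.sum_congr rfl (fun k _ => this k), Finset.sum_const, Finset.card_univ,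
    Fintype.card_fin, nsmul_eq_mul, mul_one]
  exact div_self (Nat.cast_ne_zero.2 (NeZero.ne N))

lemma marg1_symm_formula [NeZero N] {γ : (Fin N → Fin ℓ) → ℝ} (hγ : IsSymmFun N ℓ γ)
    (j : Fin ℓ) : marg1 N ℓ γ j = ∑ x : Fin N → Fin ℓ, γ x * margOf N ℓ x j := by
  have key : ∀ k : Fin N, (∑ x : Fin N → Fin ℓ, if x k = j then γ x else 0)
      = marg1 N ℓ γ j := by
    intro k
    unfold marg1
    refine Fintype.sum_bijective (fun x : Fin N → Fin ℓ => x ∘ Equiv.swap 0 k)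
      (comp_bij _) _ _ (fun x => ?_)
    simp only [Function.comp_apply, Equiv.swap_apply_left]
    rw [hγ (Equiv.swap 0 k) x]
  have expand : ∀ x : Fin N → Fin ℓ, γ x * margOf N ℓ x j
      = (∑ k : Fin N, if x k = j then γ x else 0) / N := by
    intro x
    unfold margOf
    rw [Finset.card_filter]
    push_cast [Finset.sum_div]
    rw [Finset.mul_sum]
    refine Finset.sum_congr rfl (fun k _ => ?_)
    split <;> ring
  rw [Finset.sum_congr rfl (fun x _ => expand x), ← Finset.sum_div, Finset.sum_comm,
    Finset.sum_congr rfl (fun k _ => key k), Finset.sum_const, Finset.card_univ,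
    Fintype.card_fin, nsmul_eq_mul]
  have hN : (N : ℝ) ≠ 0 := Nat.cast_ne_zero.2 (NeZero.ne N)
  field_simp

lemma marg1_gammaLam [NeZero N] {lam : Fin ℓ → ℝ} (h : lam ∈ QuantFinset N ℓ) :
    marg1 N ℓ (gammaLam N ℓ lam) = lam := by
  funext j
  rw [marg1_symm_formula (gammaLam_symm lam) j]
  have : ∀ x : Fin N → Fin ℓ, gammaLam N ℓ lam x * margOf N ℓ x j
      = gammaLam N ℓ lam x * lam j := by
    intro x
    by_cases hx : margOf N ℓ x = lam
    · rw [hx]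
    · rw [gammaLam_support lam hx]; ring
  rw [Finset.sum_congr rfl (fun x _ => this x), ← Finset.sum_mul,
    gammaLam_sum lam ((quant_mem_iff lam).1 h), one_mul]

/-- the map F -/
noncomputable def Fmap (N ℓ : ℕ) (α : (Fin ℓ → ℝ) → ℝ) : (Fin N → Fin ℓ) → ℝ :=
  fun x => ∑ lam ∈ QuantFinset N ℓ, α lam * gammaLam N ℓ lam x

lemma marg1_Fmap [NeZero N] (α : (Fin ℓ → ℝ) → ℝ) (j : Fin ℓ) :
    marg1 N ℓ (Fmap N ℓ α) j = ∑ lam ∈ QuantFinset N ℓ, α lam * lam j := by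
  unfold marg1 Fmap
  have : ∀ x : Fin N → Fin ℓ,
      (if x 0 = j then ∑ lam ∈ QuantFinset N ℓ, α lam * gammaLam N ℓ lam x else 0)
      = ∑ lam ∈ QuantFinset N ℓ, (if x 0 = j then α lam * gammaLam N ℓ lam x else 0) := by
    intro x; split <;> simp
  rw [Finset.sum_congr rfl (fun x _ => this x), Finset.sum_comm]
  refine Finset.sum_congr rfl (fun lam hlam => ?_)
  have : ∀ x : Fin N → Fin ℓ, (if x 0 = j then α lam * gammaLam N ℓ lam x else 0)
      = α lam * (if x 0 = j then gammaLam N ℓ lam x else 0) := by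
    intro x; split <;> simp
  rw [Finset.sum_congr rfl (fun x _ => this x), ← Finset.mul_sum]
  congr 1
  have := congrFun (marg1_gammaLam hlam) j
  unfold marg1 at this
  exact this

lemma orbit_sum_Fmap [NeZero N] (α : (Fin ℓ → ℝ) → ℝ) {lam : Fin ℓ → ℝ}
    (h : lam ∈ QuantFinset N ℓ) :
    (∑ x : Fin N → Fin ℓ, if margOf N ℓ x = lam then Fmap N ℓ α x else 0) = α lam := by
  unfold Fmap
  have : ∀ x : Fin N → Fin ℓ,
      (if margOf N ℓ x = lam then (∑ mu ∈ QuantFinset N ℓ, α mu * gammaLam N ℓ mu x) else 0)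
      = ∑ mu ∈ QuantFinset N ℓ, (if margOf N ℓ x = lam then α mu * gammaLam N ℓ mu x else 0) := by
    intro x; split <;> simp
  rw [Finset.sum_congr rfl (fun x _ => this x), Finset.sum_comm]
  rw [Finset.sum_eq_single lam]
  · have : ∀ x : Fin N → Fin ℓ,
        (if margOf N ℓ x = lam then α lam * gammaLam N ℓ lam x else 0)
        = α lam * gammaLam N ℓ lam x := by
      intro x
      split
      · rfl
      case isFalse hx => rw [gammaLam_support lam hx]; ring
    rw [Finset.sum_congr rfl (fun x _ => this x), ← Finset.mul_sum,
      gammaLam_sum lam ((quant_mem_iff lam).1 h), mul_one]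
  · intro mu _ hmu
    apply Finset.sum_eq_zero
    intro x _
    split
    case isTrue hx => rw [gammaLam_support mu (by rw [hx]; exact fun e => hmu e.symm), mul_zero]
    · rfl
  · intro hl; exact absurd h hl

end helpers2



section helpers3
variable {N ℓ : ℕ}

lemma Fmap_symm (α : (Fin ℓ → ℝ) → ℝ) : IsSymmFun N ℓ (Fmap N ℓ α) := fun σ x => by
  unfold Fmap
  exact Finset.sum_congr rfl (fun lam _ => by rw [gammaLam_symm lam σ x])

lemma sum_Fmap (α : (Fin ℓ → ℝ) → ℝ) :
    ∑ x : Fin N → Fin ℓ, Fmap N ℓ α x = ∑ lam ∈ QuantFinset N ℓ, α lam := by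
  unfold Fmap
  rw [Finset.sum_comm]
  refine Finset.sum_congr rfl fun lam hlam => ?_
  rw [← Finset.mul_sum, gammaLam_sum lam ((quant_mem_iff lam).1 hlam), mul_one]

lemma Fmap_nonneg (α : (Fin ℓ → ℝ) → ℝ) (hα : ∀ lam, 0 ≤ α lam) (x : Fin N → Fin ℓ) :
    0 ≤ Fmap N ℓ α x :=
  Finset.sum_nonneg fun lam _ => mul_nonneg (hα lam) (gammaLam_nonneg lam x)

lemma Fmap_sections [NeZero N] {γ : (Fin N → Fin ℓ) → ℝ} (hγs : IsSymmFun N ℓ γ)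
    (x : Fin N → Fin ℓ) :
    (∑ y : Fin N → Fin ℓ, if margOf N ℓ y = margOf N ℓ x then γ y else 0)
      * gammaLam N ℓ (margOf N ℓ x) x = γ x := by
  set μ := margOf N ℓ x with hμ
  set O := univ.filter (fun y : Fin N → Fin ℓ => margOf N ℓ y = μ) with hO
  have hmemO : ∀ y ∈ O, margOf N ℓ y = μ := fun y hy => (Finset.mem_filter.1 hy).2
  have hA : ∀ (δ : (Fin N → Fin ℓ) → ℝ), IsSymmFun N ℓ δ →
      (∑ y : Fin N → Fin ℓ, if margOf N ℓ y = μ then δ y else 0) = (O.card : ℝ) * δ x := by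
    intro δ hδ
    rw [← Finset.sum_filter, ← hO,
      Finset.sum_congr rfl (fun y hy => symm_const hδ ((hmemO y hy).trans hμ)),
      Finset.sum_const, nsmul_eq_mul]
  have hB : (O.card : ℝ) * gammaLam N ℓ μ x = 1 := by
    rw [← hA (gammaLam N ℓ μ) (gammaLam_symm μ)]
    have h1 : ∀ y : Fin N → Fin ℓ, (if margOf N ℓ y = μ then gammaLam N ℓ μ y else 0)
        = gammaLam N ℓ μ y := by
      intro y
      split
      · rfl
      case isFalse hy => rw [gammaLam_support μ hy]
    rw [Finset.sum_congr rfl (fun y _ => h1 y)]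
    exact gammaLam_sum μ ⟨x, hμ.symm⟩
  rw [hA γ hγs]
  calc (O.card : ℝ) * γ x * gammaLam N ℓ μ x
      = γ x * ((O.card : ℝ) * gammaLam N ℓ μ x) := by ring
    _ = γ x := by rw [hB, mul_one]

lemma Fmap_eq_of_feasible [NeZero N] {γ : (Fin N → Fin ℓ) → ℝ} (hγs : IsSymmFun N ℓ γ) :
    Fmap N ℓ (fun lam => if lam ∈ QuantFinset N ℓ then
        (∑ y : Fin N → Fin ℓ, if margOf N ℓ y = lam then γ y else 0) else 0) = γ := by
  funext x
  have hμQ : margOf N ℓ x ∈ QuantFinset N ℓ := (quant_mem_iff _).2 ⟨x, rfl⟩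
  unfold Fmap
  rw [Finset.sum_eq_single (margOf N ℓ x)]
  · beta_reduce
    rw [if_pos hμQ]
    exact Fmap_sections hγs x
  · intro lam _ hlam
    rw [gammaLam_support lam (fun e => hlam e.symm), mul_zero]
  · intro h; exact absurd hμQ h

end helpers3


/-- equivalence of the symmetric MMOT problem and its extremal
reformulation: the two problems have the same optimal value, and
α ↦ Σ_λ α_λ γ_λ is a cost-preserving bijection between the feasible sets. -/
theorem extremal_reformulation_equivalence (ℓ N : ℕ) [NeZero N]
    (c : (Fin N → Fin ℓ) → ℝ) (hc : IsSymmFun N ℓ c)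
    (lamStar : Fin ℓ → ℝ) (hpos : ∀ j, 0 ≤ lamStar j) (hsum : ∑ j, lamStar j = 1) :
    (sInf { r : ℝ | ∃ γ ∈ PSym N ℓ, marg1 N ℓ γ = lamStar ∧
          r = ∑ x : Fin N → Fin ℓ, γ x * c x }
      = sInf { r : ℝ | ∃ α : (Fin ℓ → ℝ) → ℝ,
          (∀ lam, 0 ≤ α lam) ∧ (∀ lam ∉ QuantFinset N ℓ, α lam = 0) ∧
          (∀ j, ∑ lam ∈ QuantFinset N ℓ, α lam * lam j = lamStar j) ∧
          r = ∑ lam ∈ QuantFinset N ℓ, cCoef N ℓ c lam * α lam })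
    ∧ Set.BijOn
        (fun α : (Fin ℓ → ℝ) → ℝ =>
          fun x => ∑ lam ∈ QuantFinset N ℓ, α lam * gammaLam N ℓ lam x)
        { α | (∀ lam, 0 ≤ α lam) ∧ (∀ lam ∉ QuantFinset N ℓ, α lam = 0) ∧
          (∀ j, ∑ lam ∈ QuantFinset N ℓ, α lam * lam j = lamStar j) }
        { γ | γ ∈ PSym N ℓ ∧ marg1 N ℓ γ = lamStar }
    ∧ ∀ α : (Fin ℓ → ℝ) → ℝ,
        (∀ lam, 0 ≤ α lam) → (∀ lam ∉ QuantFinset N ℓ, α lam = 0) →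
        (∀ j, ∑ lam ∈ QuantFinset N ℓ, α lam * lam j = lamStar j) →
        ∑ x : Fin N → Fin ℓ, (∑ lam ∈ QuantFinset N ℓ, α lam * gammaLam N ℓ lam x) * c x
          = ∑ lam ∈ QuantFinset N ℓ, cCoef N ℓ c lam * α lam := by
  have hFdef : (fun α : (Fin ℓ → ℝ) → ℝ =>
      fun x => ∑ lam ∈ QuantFinset N ℓ, α lam * gammaLam N ℓ lam x) = Fmap N ℓ := rfl
  -- Part 3: cost preservation (for all α, no hypotheses needed)
  have part3 : ∀ α : (Fin ℓ → ℝ) → ℝ,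
      ∑ x : Fin N → Fin ℓ, (∑ lam ∈ QuantFinset N ℓ, α lam * gammaLam N ℓ lam x) * c x
        = ∑ lam ∈ QuantFinset N ℓ, cCoef N ℓ c lam * α lam := by
    intro α
    rw [Finset.sum_congr rfl (fun x (_ : x ∈ univ) =>
      Finset.sum_mul (QuantFinset N ℓ) (fun lam => α lam * gammaLam N ℓ lam x) (c x)),
      Finset.sum_comm]
    refine Finset.sum_congr rfl fun lam _ => ?_
    unfold cCoef
    rw [Finset.sum_mul]
    exact Finset.sum_congr rfl fun x _ => by ring
  -- MapsTo
  have mapsTo : ∀ α : (Fin ℓ → ℝ) → ℝ, (∀ lam, 0 ≤ α lam) →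
      (∀ lam ∉ QuantFinset N ℓ, α lam = 0) →
      (∀ j, ∑ lam ∈ QuantFinset N ℓ, α lam * lam j = lamStar j) →
      Fmap N ℓ α ∈ PSym N ℓ ∧ marg1 N ℓ (Fmap N ℓ α) = lamStar := by
    intro α h1 _h2 h3
    have hα1 : ∑ lam ∈ QuantFinset N ℓ, α lam = 1 := by
      have e1 : ∑ j, ∑ lam ∈ QuantFinset N ℓ, α lam * lam j = 1 := by
        rw [Finset.sum_congr rfl (fun j _ => h3 j)]; exact hsum
      rw [Finset.sum_comm] at e1
      calc ∑ lam ∈ QuantFinset N ℓ, α lam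
          = ∑ lam ∈ QuantFinset N ℓ, ∑ j, α lam * lam j := by
            refine Finset.sum_congr rfl fun lam hlam => ?_
            rw [← Finset.mul_sum, sum_lam_eq_one hlam, mul_one]
        _ = 1 := e1
    refine ⟨⟨⟨fun x => Fmap_nonneg α h1 x, ?_⟩, Fmap_symm α⟩, ?_⟩
    · rw [sum_Fmap]; exact hα1
    · funext j
      rw [marg1_Fmap]; exact h3 j
  -- Surjectivity construction
  have surj : ∀ γ : (Fin N → Fin ℓ) → ℝ, γ ∈ PSym N ℓ → marg1 N ℓ γ = lamStar →
      ∃ α : (Fin ℓ → ℝ) → ℝ, (∀ lam, 0 ≤ α lam) ∧ (∀ lam ∉ QuantFinset N ℓ, α lam = 0) ∧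
        (∀ j, ∑ lam ∈ QuantFinset N ℓ, α lam * lam j = lamStar j) ∧ Fmap N ℓ α = γ := by
    intro γ hγ hγm
    obtain ⟨⟨hγ0, _hγ1⟩, hγs⟩ := hγ
    refine ⟨fun lam => if lam ∈ QuantFinset N ℓ then
        (∑ y : Fin N → Fin ℓ, if margOf N ℓ y = lam then γ y else 0) else 0,
      ?_, ?_, ?_, Fmap_eq_of_feasible hγs⟩
    · intro lam
      beta_reduce
      split
      · exact Finset.sum_nonneg fun y _ => by split; exacts [hγ0 y, le_refl 0]
      · exact le_refl 0
    · intro lam hlam; beta_reduce; rw [if_neg hlam]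
    · intro j
      have := marg1_Fmap (N := N) (ℓ := ℓ) (fun lam => if lam ∈ QuantFinset N ℓ then
          (∑ y : Fin N → Fin ℓ, if margOf N ℓ y = lam then γ y else 0) else 0) j
      rw [Fmap_eq_of_feasible hγs, hγm] at this
      exact this.symm
  -- Injectivity
  have inj : Set.InjOn (Fmap N ℓ)
      { α : (Fin ℓ → ℝ) → ℝ | (∀ lam, 0 ≤ α lam) ∧ (∀ lam ∉ QuantFinset N ℓ, α lam = 0) ∧
        (∀ j, ∑ lam ∈ QuantFinset N ℓ, α lam * lam j = lamStar j) } := by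
    intro α hα α' hα' heq
    funext lam
    by_cases hQ : lam ∈ QuantFinset N ℓ
    · rw [← orbit_sum_Fmap α hQ, ← orbit_sum_Fmap α' hQ, heq]
    · rw [hα.2.1 lam hQ, hα'.2.1 lam hQ]
  refine ⟨?_, ?_, fun α _ _ _ => part3 α⟩
  · -- equality of infima: the two sets of values coincide
    congr 1
    ext r
    constructor
    · rintro ⟨γ, hγP, hγm, rfl⟩
      obtain ⟨α, h1, h2, h3, hF⟩ := surj γ hγP hγm
      exact ⟨α, h1, h2, h3, by rw [show γ = Fmap N ℓ α from hF.symm]; exact part3 α⟩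
    · rintro ⟨α, h1, h2, h3, rfl⟩
      obtain ⟨hP, hm⟩ := mapsTo α h1 h2 h3
      exact ⟨Fmap N ℓ α, hP, hm, (part3 α).symm⟩
  · rw [hFdef]
    refine ⟨fun α hα => ?_, inj, fun γ hγ => ?_⟩
    · exact mapsTo α hα.1 hα.2.1 hα.2.2
    · obtain ⟨α, h1, h2, h3, hF⟩ := surj γ hγ.1 hγ.2
      exact ⟨α, ⟨h1, h2, h3⟩, hF⟩
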